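/- Let 𝒩 ⊆ 𝒩₁¹ be a uniformly ψ₁-integrating set with inf_{μ∈𝒩} m_μ > 1. Then there exists p > 0 such that sup_{μ∈𝒩} q_μ ≤ 1 − p and sup_{μ∈𝒩} f_μ'(q_μ) ≤ 1 − p. -/

import Mathlib

open MeasureTheory ProbabilityTheory ENNReal Metric

noncomputable section

/-- The canonical sample space of the Galton–Watson process: one ℕ₀-valued
coordinate `X_{k,i} = ω (k, i)` for each generation `k` and individual `i`. -/
abbrev GWOmega : Type := (ℕ × ℕ) → ℕ

/-- Generation sizes of the Galton–Watson process: `Z 0 = 1` and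
`Z (n+1) ω = ∑_{i < Z n ω} X_{n,i}(ω)`. -/
def Z : ℕ → GWOmega → ℕ
  | 0, _ => 1
  | n + 1, ω => ∑ i ∈ Finset.range (Z n ω), ω (n, i)

/-- The Lotka–Nagaev estimator `m̂_n = Z_n / Z_{n-1}`, with value `0`
if `Z_{n-1} = 0` (division by `0` in `ℝ≥0` yields `0`). -/
def mhat (n : ℕ) (ω : GWOmega) : NNReal := (Z n ω : NNReal) / (Z (n - 1) ω : NNReal)

/-- `IsGWMeasure P μ` says that `P` is the product measure `ℙ^μ = μ^{⊗(ℕ₀×ℕ)}`: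
a probability measure under which the coordinates are i.i.d. with law `μ`. -/
def IsGWMeasure (P : Measure GWOmega) (μ : PMF ℕ) : Prop :=
  IsProbabilityMeasure P ∧
    iIndepFun (fun ki : ℕ × ℕ => fun ω : GWOmega => ω ki) P ∧
    ∀ ki : ℕ × ℕ, P.map (fun ω => ω ki) = μ.toMeasure

/-- The mean `m_μ = ∑_k k·μ{k}`, as an extended nonnegative real. -/
def mMean (μ : PMF ℕ) : ℝ≥0∞ := ∑' k : ℕ, (k : ℝ≥0∞) * μ k

/-- The mean `m_μ` as a real number. -/
def mReal (μ : PMF ℕ) : ℝ := (mMean μ).toReal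

/-- The set `𝒩₁¹` of all offspring laws on `ℕ₀` with finite mean. -/
def N11 : Set (PMF ℕ) := {μ | mMean μ < ⊤}

/-- Total variation distance `d_TV(μ₁,μ₂) = (1/2)∑_k |μ₁{k} - μ₂{k}|` on laws on `ℕ₀`. -/
def dTV (μ₁ μ₂ : PMF ℕ) : ℝ := (1 / 2) * ∑' k : ℕ, |(μ₁ k).toReal - (μ₂ k).toReal|

/-- The tail mean `∑_{k ≥ ℓ} k·μ{k}`. -/
def tailMean (μ : PMF ℕ) (ℓ : ℕ) : ℝ≥0∞ :=
  ∑' k : ℕ, if ℓ ≤ k then (k : ℝ≥0∞) * μ k else 0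

/-- `𝒩` is locally uniformly ψ₁-integrating. -/
def LocUnifIntegrating (N : Set (PMF ℕ)) : Prop :=
  ∀ ε > (0 : ℝ), ∀ μ₁ ∈ N, ∃ δ > (0 : ℝ), ∃ ℓ : ℕ,
    ∀ μ₂ ∈ N, dTV μ₁ μ₂ ≤ δ → tailMean μ₂ ℓ ≤ ENNReal.ofReal ε

/-- `𝒩` is uniformly ψ₁-integrating. -/
def UnifIntegrating (N : Set (PMF ℕ)) : Prop :=
  ∀ ε > (0 : ℝ), ∃ ℓ : ℕ, ∀ μ ∈ N, tailMean μ ℓ ≤ ENNReal.ofReal ε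

/-- The Prohorov distance between two (probability) measures on `ℝ₊ = ℝ≥0`:
`ρ(ν₁,ν₂) = inf{ε > 0 : ν₁[A] ≤ ν₂[A^ε] + ε for all Borel A}`. -/
def prohorov (ν₁ ν₂ : Measure NNReal) : ℝ :=
  sInf {ε : ℝ | 0 < ε ∧ ∀ A : Set NNReal, MeasurableSet A →
    ν₁ A ≤ ν₂ (Metric.cthickening ε A) + ENNReal.ofReal ε}

/-- The law of the Lotka–Nagaev estimator `m̂_n` under `P`, as a measure on `ℝ₊`. -/
def lawMhat (P : Measure GWOmega) (n : ℕ) : Measure NNReal := P.map (mhat n)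

/-- Conditional probability `P[B | A] = P(B ∩ A)/P(A)`. -/
def condProb (P : Measure GWOmega) (B A : Set GWOmega) : ℝ≥0∞ := P (B ∩ A) / P A

/-- The extinction probability `q_μ = ℙ^μ[Z_n = 0 for some n]`. -/
def extinctProb (P : Measure GWOmega) : ℝ := (P {ω | ∃ n, Z n ω = 0}).toReal

/-- The derivative `f_μ'(s) = ∑_k k·s^{k-1}·μ{k}` of the generating function of `μ`. -/
def fgenDeriv (μ : PMF ℕ) (s : ℝ) : ℝ := ∑' k : ℕ, (k : ℝ) * s ^ (k - 1) * (μ k).toReal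

/-- Total variation distance between two measures on a discrete space
(used for laws on `ℕ₀ⁿ`). -/
def dTVmeas {α : Type*} [MeasurableSpace α] (ν₁ ν₂ : Measure α) : ℝ :=
  (1 / 2) * ∑' x : α, |(ν₁ {x}).toReal - (ν₂ {x}).toReal|

end

noncomputable section GWaux

open Filter Set MeasureTheory ProbabilityTheory

/-- Real generating function. -/
def fgen (μ : PMF ℕ) (s : ℝ) : ℝ := ∑' k : ℕ, s ^ k * (μ k).toReal

/-- σ-algebra generated by the coordinates in `S`. -/
def mCoord (S : Set (ℕ × ℕ)) : MeasurableSpace GWOmega :=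
  ⨆ p ∈ S, MeasurableSpace.comap (fun ω : GWOmega => ω p) inferInstance

lemma mCoord_le (S : Set (ℕ × ℕ)) : mCoord S ≤ (inferInstance : MeasurableSpace GWOmega) :=
  iSup₂_le fun p _ => measurable_iff_comap_le.1 (measurable_pi_apply p)

lemma mCoord_mono {S T : Set (ℕ × ℕ)} (h : S ⊆ T) : mCoord S ≤ mCoord T :=
  biSup_mono h

lemma measurable_eval_mCoord {S : Set (ℕ × ℕ)} {p : ℕ × ℕ} (hp : p ∈ S) :
    Measurable[mCoord S] (fun ω : GWOmega => ω p) :=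
  measurable_iff_comap_le.2 (le_iSup₂ (f := fun p _ => MeasurableSpace.comap
    (fun ω : GWOmega => ω p) inferInstance) p hp)

lemma measurable_sum_rand {m : MeasurableSpace GWOmega} {g : GWOmega → ℕ}
    (hg : Measurable[m] g) {h : ℕ → GWOmega → ℕ} (hh : ∀ i, Measurable[m] (h i)) :
    Measurable[m] (fun ω => ∑ i ∈ Finset.range (g ω), h i ω) := by
  apply measurable_to_countable'
  intro z
  have hset : (fun ω => ∑ i ∈ Finset.range (g ω), h i ω) ⁻¹' {z}
      = ⋃ y : ℕ, (g ⁻¹' {y}) ∩ ((fun ω => ∑ i ∈ Finset.range y, h i ω) ⁻¹' {z}) := by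
    ext ω
    simp only [Set.mem_preimage, Set.mem_singleton_iff, Set.mem_iUnion, Set.mem_inter_iff]
    constructor
    · intro hz; exact ⟨g ω, rfl, hz⟩
    · rintro ⟨y, hy, hz⟩; rw [hy]; exact hz
  rw [hset]
  exact MeasurableSet.iUnion fun y =>
    (hg (measurableSet_singleton y)).inter
      ((Finset.measurable_sum _ fun i _ => hh i) (measurableSet_singleton z))

lemma measurable_Z_past : ∀ n, Measurable[mCoord {p : ℕ × ℕ | p.1 < n}] (Z n)
  | 0 => by
      have : Z 0 = fun _ => 1 := rfl
      rw [this]; exact measurable_const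
  | n + 1 => by
      have h1 : Measurable[mCoord {p : ℕ × ℕ | p.1 < n + 1}] (Z n) :=
        (measurable_Z_past n).mono (mCoord_mono fun p hp => Nat.lt_succ_of_lt hp) le_rfl
      have h2 : ∀ i : ℕ, Measurable[mCoord {p : ℕ × ℕ | p.1 < n + 1}]
          (fun ω : GWOmega => ω (n, i)) :=
        fun i => measurable_eval_mCoord (by simp)
      exact measurable_sum_rand h1 h2

lemma measurable_Z (n : ℕ) : Measurable (Z n) :=
  (measurable_Z_past n).mono (mCoord_le _) le_rfl

lemma Z_zero_mono {ω : GWOmega} {n m : ℕ} (hnm : n ≤ m) (h : Z n ω = 0) : Z m ω = 0 := by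
  induction m, hnm using Nat.le_induction with
  | base => exact h
  | succ m hm ih => show (∑ i ∈ Finset.range (Z m ω), ω (m, i)) = 0; rw [ih]; simp

end GWaux

noncomputable section GWaux2

open Filter Set MeasureTheory ProbabilityTheory

variable {P : Measure GWOmega} {μ : PMF ℕ} (t : ℝ≥0∞)

lemma measurable_pow_coord (p : ℕ × ℕ) : Measurable (fun ω : GWOmega => t ^ ω p) :=
  measurable_from_top.comp (measurable_pi_apply p)

lemma measurableSet_Zeq (n z : ℕ) : MeasurableSet {ω : GWOmega | Z n ω = z} :=
  measurable_Z n (measurableSet_singleton z)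

lemma lintegral_coord (hP : IsGWMeasure P μ) (p : ℕ × ℕ) :
    ∫⁻ ω, t ^ ω p ∂P = ∑' k : ℕ, t ^ k * μ k := by
  obtain ⟨hprob, hind, hmap⟩ := hP
  have : ∫⁻ ω, t ^ ω p ∂P = ∫⁻ x : ℕ, t ^ x ∂(P.map (fun ω => ω p)) :=
    (lintegral_map measurable_from_top (measurable_pi_apply p)).symm
  rw [this, hmap p, lintegral_countable']
  exact tsum_congr fun k => by
    rw [PMF.toMeasure_apply_singleton _ _ (measurableSet_singleton k)]

lemma lintegral_indicator_prod (hP : IsGWMeasure P μ) (n z : ℕ) (j : ℕ) :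
    ∫⁻ ω, Set.indicator {ω' : GWOmega | Z n ω' = z}
      (fun ω' => ∏ i ∈ Finset.range j, t ^ ω' (n, i)) ω ∂P
    = P {ω' : GWOmega | Z n ω' = z} * (∑' k : ℕ, t ^ k * μ k) ^ j := by
  induction j with
  | zero =>
      simp only [Finset.range_zero, Finset.prod_empty, pow_zero, mul_one]
      rw [lintegral_indicator_const (measurableSet_Zeq n z), one_mul]
  | succ j ih =>
      set A := {ω' : GWOmega | Z n ω' = z} with hA
      set F := ∑' k : ℕ, t ^ k * μ k with hF
      have hsplit : (fun ω => Set.indicator A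
            (fun ω' => ∏ i ∈ Finset.range (j + 1), t ^ ω' (n, i)) ω)
          = fun ω => (Set.indicator A (fun ω' => ∏ i ∈ Finset.range j, t ^ ω' (n, i)) ω)
              * t ^ ω (n, j) := by
        funext ω
        by_cases hω : ω ∈ A
        · simp [Set.indicator_of_mem hω, Finset.prod_range_succ]
        · simp [Set.indicator_of_notMem hω]
      have := hP
      obtain ⟨hprob, hind, hmap⟩ := this
      set S : Set (ℕ × ℕ) := {p | p.1 < n} ∪ {p | p.1 = n ∧ p.2 < j} with hS
      have hMf : mCoord S ≤ (inferInstance : MeasurableSpace GWOmega) := mCoord_le S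
      have hMg : MeasurableSpace.comap (fun ω : GWOmega => ω (n, j)) inferInstance
          ≤ (inferInstance : MeasurableSpace GWOmega) :=
        measurable_iff_comap_le.1 (measurable_pi_apply (n, j))
      have hdisj : Disjoint S ({(n, j)} : Set (ℕ × ℕ)) := by
        rw [Set.disjoint_singleton_right]
        rintro (h | ⟨h1, h2⟩)
        · exact absurd h (lt_irrefl n)
        · exact absurd h2 (lt_irrefl j)
      have hindep : ProbabilityTheory.Indep (mCoord S)
          (MeasurableSpace.comap (fun ω : GWOmega => ω (n, j)) inferInstance) P := by
        have h := ProbabilityTheory.indep_iSup_of_disjoint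
          (m := fun p : ℕ × ℕ => MeasurableSpace.comap (fun ω : GWOmega => ω p) inferInstance)
          (fun p => measurable_iff_comap_le.1 (measurable_pi_apply p))
          hind.iIndep hdisj
        simpa [mCoord] using h
      have hmeasf : Measurable[mCoord S]
          (Set.indicator A (fun ω' => ∏ i ∈ Finset.range j, t ^ ω' (n, i))) := by
        apply Measurable.indicator
        · apply Finset.measurable_prod
          intro i hi
          exact measurable_from_top.comp (measurable_eval_mCoord
            (Or.inr ⟨rfl, Finset.mem_range.1 hi⟩))
        · have : MeasurableSet[mCoord {p : ℕ × ℕ | p.1 < n}] A :=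
            measurable_Z_past n (measurableSet_singleton z)
          exact (mCoord_mono (Set.subset_union_left)) A this
      have hmeasg : Measurable[MeasurableSpace.comap
          (fun ω : GWOmega => ω (n, j)) inferInstance] (fun ω : GWOmega => t ^ ω (n, j)) :=
        measurable_from_top.comp (Measurable.of_comap_le le_rfl)
      rw [hsplit, lintegral_mul_eq_lintegral_mul_lintegral_of_independent_measurableSpace
        hMf hMg hindep hmeasf hmeasg, ih, lintegral_coord t hP, pow_succ, mul_assoc]

lemma lintegral_pow_Z_succ (hP : IsGWMeasure P μ) (n : ℕ) :
    ∫⁻ ω, t ^ Z (n + 1) ω ∂P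
      = ∑' z : ℕ, P {ω : GWOmega | Z n ω = z} * (∑' k : ℕ, t ^ k * μ k) ^ z := by
  have hpt : ∀ ω : GWOmega, t ^ Z (n + 1) ω
      = ∑' z : ℕ, Set.indicator {ω' : GWOmega | Z n ω' = z}
          (fun ω' => ∏ i ∈ Finset.range z, t ^ ω' (n, i)) ω := by
    intro ω
    rw [tsum_eq_single (Z n ω) (fun z hz => Set.indicator_of_notMem (by intro h; exact hz (Eq.symm h)) _)]
    · rw [Set.indicator_of_mem (by exact rfl : ω ∈ {ω' : GWOmega | Z n ω' = Z n ω}),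
        Finset.prod_pow_eq_pow_sum]
      rfl
  calc ∫⁻ ω, t ^ Z (n + 1) ω ∂P
      = ∫⁻ ω, ∑' z : ℕ, Set.indicator {ω' : GWOmega | Z n ω' = z}
          (fun ω' => ∏ i ∈ Finset.range z, t ^ ω' (n, i)) ω ∂P := by
        exact lintegral_congr hpt
    _ = ∑' z : ℕ, ∫⁻ ω, Set.indicator {ω' : GWOmega | Z n ω' = z}
          (fun ω' => ∏ i ∈ Finset.range z, t ^ ω' (n, i)) ω ∂P := by
        apply lintegral_tsum
        intro z
        exact (Measurable.indicator
          (Finset.measurable_prod _ fun i _ => measurable_pow_coord t (n, i))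
          (measurableSet_Zeq n z)).aemeasurable
    _ = _ := tsum_congr fun z => lintegral_indicator_prod t hP n z z

lemma lintegral_pow_Z (hP : IsGWMeasure P μ) (c : ℝ≥0∞) (n : ℕ) :
    ∫⁻ ω, c ^ Z n ω ∂P = ∑' z : ℕ, P {ω : GWOmega | Z n ω = z} * c ^ z := by
  have hpt : ∀ ω : GWOmega, c ^ Z n ω
      = ∑' z : ℕ, Set.indicator {ω' : GWOmega | Z n ω' = z} (fun _ => c ^ z) ω := by
    intro ω
    rw [tsum_eq_single (Z n ω) (fun z hz => Set.indicator_of_notMem (by intro h; exact hz (Eq.symm h)) _),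
      Set.indicator_of_mem (by exact rfl : ω ∈ {ω' : GWOmega | Z n ω' = Z n ω})]
  rw [lintegral_congr hpt, lintegral_tsum (fun z =>
    (measurable_const.indicator (measurableSet_Zeq n z)).aemeasurable)]
  exact tsum_congr fun z => by rw [lintegral_indicator_const (measurableSet_Zeq n z), mul_comm]

lemma lintegral_pow_Z_le (hP : IsGWMeasure P μ) (hF : (∑' k : ℕ, t ^ k * μ k) ≤ t) : ∀ n, ∫⁻ ω, t ^ Z n ω ∂P ≤ t := by
  intro n
  induction n with
  | zero =>
      have : IsProbabilityMeasure P := hP.1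
      have h0 : (fun ω : GWOmega => t ^ Z 0 ω) = fun _ => t := by
        funext ω; show t ^ (1 : ℕ) = t; rw [pow_one]
      rw [h0, lintegral_const, measure_univ, mul_one]
  | succ n ih =>
      calc ∫⁻ ω, t ^ Z (n + 1) ω ∂P
          = ∑' z : ℕ, P {ω : GWOmega | Z n ω = z} * (∑' k : ℕ, t ^ k * μ k) ^ z :=
            lintegral_pow_Z_succ t hP n
        _ ≤ ∑' z : ℕ, P {ω : GWOmega | Z n ω = z} * t ^ z := by
            exact ENNReal.tsum_le_tsum fun z => mul_le_mul_right (pow_le_pow_left' hF z) _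
        _ = ∫⁻ ω, t ^ Z n ω ∂P := (lintegral_pow_Z hP t n).symm
        _ ≤ t := ih

lemma extinct_measure_le (hP : IsGWMeasure P μ) (ht : t ≤ 1) (hF : (∑' k : ℕ, t ^ k * μ k) ≤ t) :
    P {ω : GWOmega | ∃ n, Z n ω = 0} ≤ t := by
  have hU : {ω : GWOmega | ∃ n, Z n ω = 0} = ⋃ n : ℕ, {ω : GWOmega | Z n ω = 0} := by
    ext ω; simp [Set.mem_iUnion]
  have hdir : Directed (· ⊆ ·) (fun n : ℕ => {ω : GWOmega | Z n ω = 0}) := by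
    apply Monotone.directed_le
    intro n m hnm ω hω
    exact Z_zero_mono hnm hω
  rw [hU, hdir.measure_iUnion]
  apply iSup_le
  intro n
  calc P {ω : GWOmega | Z n ω = 0}
      ≤ ∫⁻ ω, t ^ Z n ω ∂P := by
        have : P {ω : GWOmega | Z n ω = 0}
            = ∫⁻ ω, Set.indicator {ω' : GWOmega | Z n ω' = 0} (fun _ => (1 : ℝ≥0∞)) ω ∂P := by
          rw [lintegral_indicator_const (measurableSet_Zeq n 0), one_mul]
        rw [this]
        apply lintegral_mono
        intro ω
        by_cases hω : ω ∈ {ω' : GWOmega | Z n ω' = 0}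
        · have h0 : Z n ω = 0 := hω
          simp [Set.indicator_of_mem hω, h0]
        · simp [Set.indicator_of_notMem hω]
    _ ≤ t := lintegral_pow_Z_le t hP hF n

end GWaux2

noncomputable section GWaux3

open Filter Set Topology MeasureTheory ProbabilityTheory

lemma summable_pmf_toReal (μ : PMF ℕ) : Summable (fun k : ℕ => (μ k).toReal) :=
  ENNReal.summable_toReal (by rw [PMF.tsum_coe]; exact ENNReal.one_ne_top)

lemma tsum_pmf_toReal (μ : PMF ℕ) : ∑' k : ℕ, (μ k).toReal = 1 := by
  rw [← ENNReal.tsum_toReal_eq (fun k => PMF.apply_ne_top μ k), PMF.tsum_coe, ENNReal.toReal_one]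

lemma summable_kmu (μ : PMF ℕ) (hμ : mMean μ ≠ ⊤) :
    Summable (fun k : ℕ => (k : ℝ) * (μ k).toReal) := by
  have := ENNReal.summable_toReal (f := fun k : ℕ => (k : ℝ≥0∞) * μ k) hμ
  simpa [ENNReal.toReal_mul] using this

lemma summable_phi (μ : PMF ℕ) {s : ℝ} (h0 : 0 ≤ s) (h1 : s ≤ 1) :
    Summable (fun k : ℕ => s ^ k * (μ k).toReal) := by
  apply Summable.of_nonneg_of_le
    (fun k => mul_nonneg (pow_nonneg h0 k) ENNReal.toReal_nonneg)
    (fun k => mul_le_of_le_one_left ENNReal.toReal_nonneg (pow_le_one₀ h0 h1))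
  exact summable_pmf_toReal μ

lemma summable_deriv (μ : PMF ℕ) (hμ : mMean μ ≠ ⊤) {s : ℝ} (h0 : 0 ≤ s) (h1 : s ≤ 1) :
    Summable (fun k : ℕ => (k : ℝ) * s ^ (k - 1) * (μ k).toReal) := by
  apply Summable.of_nonneg_of_le
    (fun k => mul_nonneg (mul_nonneg (Nat.cast_nonneg k) (pow_nonneg h0 _))
      ENNReal.toReal_nonneg)
    (fun k => ?_) (summable_kmu μ hμ)
  apply mul_le_mul_of_nonneg_right _ ENNReal.toReal_nonneg
  calc (k : ℝ) * s ^ (k - 1) ≤ (k : ℝ) * 1 :=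
        mul_le_mul_of_nonneg_left (pow_le_one₀ h0 h1) (Nat.cast_nonneg k)
    _ = (k : ℝ) := mul_one _

lemma fgen_nonneg (μ : PMF ℕ) {s : ℝ} (h0 : 0 ≤ s) : 0 ≤ fgen μ s :=
  tsum_nonneg fun k => mul_nonneg (pow_nonneg h0 k) ENNReal.toReal_nonneg

lemma one_sub_fgen_ge (μ : PMF ℕ) {s : ℝ} (h0 : 0 ≤ s) (h1 : s ≤ 1) (ℓ : ℕ) :
    (1 - s) * s ^ (ℓ - 1) * (∑ k ∈ Finset.range ℓ, (k : ℝ) * (μ k).toReal)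
      ≤ 1 - fgen μ s := by
  have hsummand : Summable (fun k : ℕ => (1 - s ^ k) * (μ k).toReal) := by
    refine ((summable_pmf_toReal μ).sub (summable_phi μ h0 h1)).congr fun k => by ring
  have hsum1 : (1 : ℝ) - fgen μ s = ∑' k : ℕ, (1 - s ^ k) * (μ k).toReal := by
    have h := Summable.tsum_sub (summable_pmf_toReal μ) (summable_phi μ h0 h1)
    rw [tsum_pmf_toReal μ] at h
    rw [fgen, ← h]
    exact tsum_congr fun k => by ring
  have hterm : ∀ k < ℓ, (1 - s) * (k : ℝ) * s ^ (ℓ - 1) ≤ 1 - s ^ k := by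
    intro k hk
    have hgeom : (1 : ℝ) - s ^ k = (1 - s) * ∑ i ∈ Finset.range k, s ^ i := by
      linear_combination geom_sum_mul s k
    have hsumge : (k : ℝ) * s ^ (ℓ - 1) ≤ ∑ i ∈ Finset.range k, s ^ i := by
      have : (k : ℝ) * s ^ (ℓ - 1) = ∑ _i ∈ Finset.range k, s ^ (ℓ - 1) := by
        rw [Finset.sum_const, Finset.card_range, nsmul_eq_mul]
      rw [this]
      exact Finset.sum_le_sum fun i hi =>
        pow_le_pow_of_le_one h0 h1 (by have := Finset.mem_range.1 hi; omega)
    calc (1 - s) * (k : ℝ) * s ^ (ℓ - 1) = (1 - s) * ((k : ℝ) * s ^ (ℓ - 1)) := by ring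
      _ ≤ (1 - s) * ∑ i ∈ Finset.range k, s ^ i :=
          mul_le_mul_of_nonneg_left hsumge (by linarith)
      _ = 1 - s ^ k := hgeom.symm
  rw [hsum1]
  calc (1 - s) * s ^ (ℓ - 1) * (∑ k ∈ Finset.range ℓ, (k : ℝ) * (μ k).toReal)
      = ∑ k ∈ Finset.range ℓ, ((1 - s) * (k : ℝ) * s ^ (ℓ - 1)) * (μ k).toReal := by
        rw [Finset.mul_sum]; exact Finset.sum_congr rfl fun k _ => by ring
    _ ≤ ∑ k ∈ Finset.range ℓ, (1 - s ^ k) * (μ k).toReal :=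
        Finset.sum_le_sum fun k hk => mul_le_mul_of_nonneg_right
          (hterm k (Finset.mem_range.1 hk)) ENNReal.toReal_nonneg
    _ ≤ ∑' k : ℕ, (1 - s ^ k) * (μ k).toReal := by
        apply Summable.sum_le_tsum _ (fun k _ => mul_nonneg ?_ ENNReal.toReal_nonneg)
          (((summable_pmf_toReal μ).sub (summable_phi μ h0 h1)).congr fun k => by ring)
        have := pow_le_one₀ h0 h1 (n := k); linarith

lemma slope_bound (μ : PMF ℕ) (hμ : mMean μ ≠ ⊤) {q b : ℝ} (h0 : 0 ≤ q) (hqb : q ≤ b)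
    (hb1 : b ≤ 1) : (b - q) * fgenDeriv μ q ≤ fgen μ b - fgen μ q := by
  have hq1 : q ≤ 1 := hqb.trans hb1
  have hb0 : 0 ≤ b := h0.trans hqb
  have hcore : ∀ k : ℕ, (b - q) * ((k : ℝ) * q ^ (k - 1)) ≤ b ^ k - q ^ k := by
    intro k
    cases k with
    | zero => simp
    | succ k =>
        simp only [Nat.add_sub_cancel]
        have hgeom : b ^ (k + 1) - q ^ (k + 1)
            = (∑ i ∈ Finset.range (k + 1), b ^ i * q ^ (k - i)) * (b - q) := by
          have h := geom_sum₂_mul b q (k + 1)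
          simp only [Nat.add_sub_cancel] at h
          exact h.symm
        have hge : ((k : ℝ) + 1) * q ^ k ≤ ∑ i ∈ Finset.range (k + 1), b ^ i * q ^ (k - i) := by
          have heq : ∀ i ∈ Finset.range (k + 1), q ^ i * q ^ (k - i) = q ^ k := by
            intro i hi
            rw [← pow_add]
            congr 1
            have := Finset.mem_range.1 hi; omega
          calc ((k : ℝ) + 1) * q ^ k = ∑ _i ∈ Finset.range (k + 1), q ^ k := by
                rw [Finset.sum_const, Finset.card_range, nsmul_eq_mul]; push_cast; ring
            _ = ∑ i ∈ Finset.range (k + 1), q ^ i * q ^ (k - i) :=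
                (Finset.sum_congr rfl heq).symm
            _ ≤ ∑ i ∈ Finset.range (k + 1), b ^ i * q ^ (k - i) :=
                Finset.sum_le_sum fun i _ => mul_le_mul_of_nonneg_right
                  (pow_le_pow_left₀ h0 hqb i) (pow_nonneg h0 _)
        calc (b - q) * ((((k + 1 : ℕ)) : ℝ) * q ^ k)
            = (((k : ℝ) + 1) * q ^ k) * (b - q) := by push_cast; ring
          _ ≤ (∑ i ∈ Finset.range (k + 1), b ^ i * q ^ (k - i)) * (b - q) :=
              mul_le_mul_of_nonneg_right hge (by linarith)
          _ = b ^ (k + 1) - q ^ (k + 1) := hgeom.symm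
  have hL : (b - q) * fgenDeriv μ q
      = ∑' k : ℕ, (b - q) * ((k : ℝ) * q ^ (k - 1) * (μ k).toReal) := by
    rw [fgenDeriv, tsum_mul_left]
  have hR : fgen μ b - fgen μ q = ∑' k : ℕ, (b ^ k - q ^ k) * (μ k).toReal := by
    rw [fgen, fgen, ← Summable.tsum_sub (summable_phi μ hb0 hb1) (summable_phi μ h0 hq1)]
    exact tsum_congr fun k => by ring
  rw [hL, hR]
  apply Summable.tsum_le_tsum _ ((summable_deriv μ hμ h0 hq1).mul_left _)
    (((summable_phi μ hb0 hb1).sub (summable_phi μ h0 hq1)).congr fun k => by ring)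
  intro k
  calc (b - q) * ((k : ℝ) * q ^ (k - 1) * (μ k).toReal)
      = ((b - q) * ((k : ℝ) * q ^ (k - 1))) * (μ k).toReal := by ring
    _ ≤ (b ^ k - q ^ k) * (μ k).toReal :=
        mul_le_mul_of_nonneg_right (hcore k) ENNReal.toReal_nonneg

lemma fgenDeriv_mono (μ : PMF ℕ) (hμ : mMean μ ≠ ⊤) {a b : ℝ} (h0 : 0 ≤ a) (hab : a ≤ b)
    (hb1 : b ≤ 1) : fgenDeriv μ a ≤ fgenDeriv μ b := by
  have hb0 : 0 ≤ b := h0.trans hab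
  apply Summable.tsum_le_tsum _ (summable_deriv μ hμ h0 (hab.trans hb1)) (summable_deriv μ hμ hb0 hb1)
  intro k
  exact mul_le_mul_of_nonneg_right
    (mul_le_mul_of_nonneg_left (pow_le_pow_left₀ h0 hab _) (Nat.cast_nonneg k))
    ENNReal.toReal_nonneg

lemma continuousOn_fgen (μ : PMF ℕ) : ContinuousOn (fgen μ) (Set.Icc 0 1) := by
  have hten := tendstoUniformlyOn_tsum (u := fun k : ℕ => (μ k).toReal)
    (f := fun (k : ℕ) (s : ℝ) => s ^ k * (μ k).toReal) (summable_pmf_toReal μ)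
    (s := Set.Icc 0 1) ?_
  · exact hten.continuousOn (Frequently.of_forall fun t =>
      (Continuous.continuousOn (by fun_prop)))
  · intro k x hx
    rw [Real.norm_eq_abs, abs_of_nonneg (mul_nonneg (pow_nonneg hx.1 k) ENNReal.toReal_nonneg)]
    exact mul_le_of_le_one_left ENNReal.toReal_nonneg (pow_le_one₀ hx.1 hx.2)

lemma exists_q (μ : PMF ℕ) {θ : ℝ} (hθ0 : 0 ≤ θ) (hθ1 : θ < 1)
    (hθfix : fgen μ θ ≤ θ) : ∃ q, 0 ≤ q ∧ q ≤ θ ∧ fgen μ q = q := by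
  set S : Set ℝ := {s ∈ Set.Icc (0 : ℝ) 1 | fgen μ s ≤ s} with hS
  have hclosed : IsClosed S :=
    isClosed_Icc.isClosed_le (continuousOn_fgen μ) continuousOn_id
  have hne : θ ∈ S := ⟨⟨hθ0, hθ1.le⟩, hθfix⟩
  have hbdd : BddBelow S := ⟨0, fun s hs => hs.1.1⟩
  set q := sInf S with hq
  have hqS : q ∈ S := hclosed.csInf_mem ⟨θ, hne⟩ hbdd
  have hq0 : 0 ≤ q := hqS.1.1
  have hqθ : q ≤ θ := csInf_le hbdd hne
  refine ⟨q, hq0, hqθ, le_antisymm hqS.2 ?_⟩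
  rcases eq_or_lt_of_le hq0 with h | h
  · rw [← h]; exact fgen_nonneg μ le_rfl
  · have hlt : ∀ s ∈ Set.Ico (0 : ℝ) q, s ≤ fgen μ s := by
      intro s hs
      by_contra hcon
      push_neg at hcon
      have hsS : s ∈ S := ⟨⟨hs.1, (hs.2.le.trans hqθ).trans hθ1.le⟩, hcon.le⟩
      exact absurd (csInf_le hbdd hsS) (not_le.2 hs.2)
    have hcwa : Tendsto (fgen μ) (𝓝[Set.Ico (0 : ℝ) q] q) (𝓝 (fgen μ q)) := by
      apply ((continuousOn_fgen μ).continuousWithinAt ⟨hq0, hqS.1.2⟩).mono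
      exact fun x hx => ⟨hx.1, (hx.2.le.trans hqθ).trans hθ1.le⟩
    have : (𝓝[Set.Ico (0 : ℝ) q] q).NeBot := right_nhdsWithin_Ico_neBot h
    exact le_of_tendsto_of_tendsto (tendsto_id.mono_left nhdsWithin_le_nhds) hcwa
      (eventually_mem_nhdsWithin.mono hlt)

end GWaux3

noncomputable section GWaux4

open Filter Set Topology MeasureTheory ProbabilityTheory

lemma key_analytic (μ : PMF ℕ) (hμ : mMean μ ≠ ⊤) (ℓ : ℕ) (M c₀ θ : ℝ)
    (hM1 : 1 < M) (hc1 : 1 < c₀) (hθ0 : 0 ≤ θ) (hθ1 : θ < 1)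
    (hcθ : c₀ ≤ θ ^ (ℓ - 1) * M)
    (hhead : M ≤ ∑ k ∈ Finset.range ℓ, (k : ℝ) * (μ k).toReal) :
    ∃ q, 0 ≤ q ∧ q ≤ θ ∧ fgen μ q ≤ q ∧
      fgenDeriv μ q ≤ 1 - (1 - θ) / 2 * (c₀ - 1) := by
  have hkey : ∀ s : ℝ, 0 ≤ s → s ≤ 1 → (1 - s) * (s ^ (ℓ - 1) * M) ≤ 1 - fgen μ s := by
    intro s h0 h1
    calc (1 - s) * (s ^ (ℓ - 1) * M) = (1 - s) * s ^ (ℓ - 1) * M := by ring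
      _ ≤ (1 - s) * s ^ (ℓ - 1) * (∑ k ∈ Finset.range ℓ, (k : ℝ) * (μ k).toReal) :=
          mul_le_mul_of_nonneg_left hhead
            (mul_nonneg (by linarith) (pow_nonneg h0 _))
      _ ≤ 1 - fgen μ s := one_sub_fgen_ge μ h0 h1 ℓ
  have hθfix : fgen μ θ ≤ θ := by
    have h1 := hkey θ hθ0 hθ1.le
    have h2 : (1 - θ) * c₀ ≤ (1 - θ) * (θ ^ (ℓ - 1) * M) :=
      mul_le_mul_of_nonneg_left hcθ (by linarith)
    nlinarith
  obtain ⟨q, hq0, hqθ, hqfix⟩ := exists_q μ hθ0 hθ1 hθfix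
  set b : ℝ := (1 + θ) / 2 with hb
  have hθb : θ < b := by rw [hb]; linarith
  have hb1 : b < 1 := by rw [hb]; linarith
  have hb0 : (0 : ℝ) ≤ b := by rw [hb]; linarith
  have hqb : q < b := lt_of_le_of_lt hqθ hθb
  have hcb : c₀ ≤ b ^ (ℓ - 1) * M :=
    hcθ.trans (mul_le_mul_of_nonneg_right (pow_le_pow_left₀ hθ0 (hθb.le) _) (by linarith))
  have hfb : fgen μ b ≤ 1 - (1 - b) * c₀ := by
    have h1 := hkey b hb0 hb1.le
    have h2 : (1 - b) * c₀ ≤ (1 - b) * (b ^ (ℓ - 1) * M) :=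
      mul_le_mul_of_nonneg_left hcb (by linarith)
    linarith
  have hslope := slope_bound μ hμ hq0 hqb.le hb1.le
  rw [hqfix] at hslope
  set E : ℝ := (1 - b) * (c₀ - 1) with hE
  have hE0 : 0 ≤ E := mul_nonneg (by linarith) (by linarith)
  have hd1 : b - q ≤ 1 := by linarith
  have hd0 : 0 < b - q := by linarith
  have hmain : (b - q) * fgenDeriv μ q ≤ (b - q) - E := by
    have : fgen μ b - q ≤ (b - q) - E := by rw [hE]; nlinarith
    linarith
  have hfd : fgenDeriv μ q ≤ 1 - E := by
    have h3 : (b - q) - E ≤ (b - q) * (1 - E) := by nlinarith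
    have h4 : (b - q) * fgenDeriv μ q ≤ (b - q) * (1 - E) := le_trans hmain h3
    exact le_of_mul_le_mul_left (by linarith [h4]) hd0
  refine ⟨q, hq0, hqθ, hqfix.le, ?_⟩
  have : E = (1 - θ) / 2 * (c₀ - 1) := by rw [hE, hb]; ring
  linarith [hfd, this ▸ hfd]

lemma extinct_le {P : Measure GWOmega} {μ : PMF ℕ} (hP : IsGWMeasure P μ) {s : ℝ}
    (h0 : 0 ≤ s) (h1 : s ≤ 1) (hfix : fgen μ s ≤ s) : extinctProb P ≤ s := by
  set t : ℝ≥0∞ := ENNReal.ofReal s with htdef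
  have ht1 : t ≤ 1 := ENNReal.ofReal_le_one.2 h1
  have hterm : ∀ k : ℕ, t ^ k * μ k ≤ μ k := fun k => by
    calc t ^ k * μ k ≤ 1 ^ k * μ k :=
          mul_le_mul_left (pow_le_pow_left' ht1 k) _
      _ = μ k := by rw [one_pow, one_mul]
  have hterm_top : ∀ k : ℕ, t ^ k * μ k ≠ ⊤ :=
    fun k => ne_top_of_le_ne_top (PMF.apply_ne_top μ k) (hterm k)
  have hFtop : (∑' k : ℕ, t ^ k * μ k) ≠ ⊤ :=
    ne_top_of_le_ne_top (by rw [PMF.tsum_coe]; exact ENNReal.one_ne_top)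
      (ENNReal.tsum_le_tsum hterm)
  have hFtoReal : (∑' k : ℕ, t ^ k * μ k).toReal = fgen μ s := by
    rw [ENNReal.tsum_toReal_eq hterm_top, fgen]
    exact tsum_congr fun k => by
      rw [ENNReal.toReal_mul, ENNReal.toReal_pow, htdef, ENNReal.toReal_ofReal h0]
  have hF : (∑' k : ℕ, t ^ k * μ k) ≤ t := by
    rw [← ENNReal.ofReal_toReal hFtop, hFtoReal, htdef]
    exact ENNReal.ofReal_le_ofReal hfix
  have hle := extinct_measure_le t hP ht1 hF
  calc extinctProb P ≤ t.toReal := ENNReal.toReal_mono ENNReal.ofReal_ne_top hle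
    _ = s := ENNReal.toReal_ofReal h0

end GWaux4


/-- Lemma 3.2(ii): uniform bounds on the extinction probability `q_μ` and on
`f_μ'(q_μ)` on a uniformly ψ₁-integrating set with `inf_{μ∈𝒩} m_μ > 1`. -/
theorem extinction_bounds_uniform
    (P : PMF ℕ → Measure GWOmega) (hP : ∀ μ, IsGWMeasure (P μ) μ)
    (N : Set (PMF ℕ)) (hN : N ⊆ N11) (hint : UnifIntegrating N)
    (hm : ∃ m₀ > (1 : ℝ), ∀ μ ∈ N, m₀ ≤ mReal μ) :
    ∃ p > (0 : ℝ), ∀ μ ∈ N,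
      extinctProb (P μ) ≤ 1 - p ∧ fgenDeriv μ (extinctProb (P μ)) ≤ 1 - p := by
  obtain ⟨m₀, hm₀, hmean⟩ := hm
  set ε : ℝ := (m₀ - 1) / 2 with hε
  have hεpos : 0 < ε := by rw [hε]; linarith
  obtain ⟨ℓ₀, hℓ₀⟩ := hint ε hεpos
  set ℓ : ℕ := max ℓ₀ 2 with hℓ
  have hℓ2 : 2 ≤ ℓ := le_max_right _ _
  have htail : ∀ μ ∈ N, tailMean μ ℓ ≤ ENNReal.ofReal ε := by
    intro μ hμ
    refine le_trans ?_ (hℓ₀ μ hμ)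
    unfold tailMean
    apply ENNReal.tsum_le_tsum
    intro k
    by_cases h : ℓ ≤ k
    · rw [if_pos h, if_pos (le_trans (le_max_left _ _) h)]
    · rw [if_neg h]; exact zero_le
  set M : ℝ := (m₀ + 1) / 2 with hM
  have hM1 : 1 < M := by rw [hM]; linarith
  set c₀ : ℝ := (1 + M) / 2 with hc₀
  have hc1 : 1 < c₀ := by rw [hc₀]; linarith
  have hcM : c₀ < M := by rw [hc₀]; linarith
  have hMpos : 0 < M := by linarith
  set θ : ℝ := (c₀ / M) ^ ((1 : ℝ) / ((ℓ - 1 : ℕ) : ℝ)) with hθ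
  have hbase0 : 0 < c₀ / M := div_pos (by linarith) hMpos
  have hbase1 : c₀ / M < 1 := (div_lt_one hMpos).2 hcM
  have hlpos : 0 < ((ℓ - 1 : ℕ) : ℝ) := by
    have : 0 < ℓ - 1 := by omega
    exact_mod_cast this
  have hexp : (0 : ℝ) < 1 / ((ℓ - 1 : ℕ) : ℝ) := div_pos one_pos hlpos
  have hθ0 : 0 < θ := Real.rpow_pos_of_pos hbase0 _
  have hθ1 : θ < 1 := Real.rpow_lt_one hbase0.le hbase1 hexp
  have hθpow : θ ^ (ℓ - 1) * M = c₀ := by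
    have h1 : θ ^ (ℓ - 1) = c₀ / M := by
      rw [hθ, ← Real.rpow_natCast ((c₀ / M) ^ ((1 : ℝ) / ((ℓ - 1 : ℕ) : ℝ))) (ℓ - 1),
        ← Real.rpow_mul hbase0.le,
        one_div_mul_cancel (ne_of_gt hlpos),
        Real.rpow_one]
    rw [h1]; field_simp
  set p : ℝ := min (1 - θ) ((1 - θ) / 2 * (c₀ - 1)) with hp
  have hppos : 0 < p := lt_min (by linarith) (mul_pos (by linarith) (by linarith))
  refine ⟨p, hppos, fun μ hμN => ?_⟩
  have hμtop : mMean μ ≠ ⊤ := (hN hμN).ne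
  have hsplit : mMean μ = (∑ k ∈ Finset.range ℓ, (k : ℝ≥0∞) * μ k) + tailMean μ ℓ := by
    rw [mMean, tailMean]
    have h1 : ∀ k : ℕ, (k : ℝ≥0∞) * μ k
        = (if k < ℓ then (k : ℝ≥0∞) * μ k else 0) + (if ℓ ≤ k then (k : ℝ≥0∞) * μ k else 0) := by
      intro k
      by_cases h : ℓ ≤ k
      · rw [if_neg (by omega), if_pos h, zero_add]
      · rw [if_pos (by omega), if_neg h, add_zero]
    calc ∑' k : ℕ, (k : ℝ≥0∞) * μ k
        = ∑' k : ℕ, ((if k < ℓ then (k : ℝ≥0∞) * μ k else 0)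
            + (if ℓ ≤ k then (k : ℝ≥0∞) * μ k else 0)) := tsum_congr h1
      _ = (∑' k : ℕ, if k < ℓ then (k : ℝ≥0∞) * μ k else 0)
            + ∑' k : ℕ, (if ℓ ≤ k then (k : ℝ≥0∞) * μ k else 0) := ENNReal.tsum_add
      _ = (∑ k ∈ Finset.range ℓ, (k : ℝ≥0∞) * μ k)
            + ∑' k : ℕ, (if ℓ ≤ k then (k : ℝ≥0∞) * μ k else 0) := by
          congr 1
          rw [tsum_eq_sum (s := Finset.range ℓ)
            (fun k hk => if_neg (by simpa using hk))]
          exact Finset.sum_congr rfl fun k hk => if_pos (Finset.mem_range.1 hk)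
  have htailR : (tailMean μ ℓ).toReal ≤ ε :=
    ENNReal.toReal_le_of_le_ofReal hεpos.le (htail μ hμN)
  have hheadfin : ∀ k ∈ Finset.range ℓ, (k : ℝ≥0∞) * μ k ≠ ⊤ :=
    fun k _ => ENNReal.mul_ne_top (ENNReal.natCast_ne_top k) (PMF.apply_ne_top μ k)
  have hhead : M ≤ ∑ k ∈ Finset.range ℓ, (k : ℝ) * (μ k).toReal := by
    have h2 : mReal μ
        = (∑ k ∈ Finset.range ℓ, (k : ℝ) * (μ k).toReal) + (tailMean μ ℓ).toReal := by
      rw [mReal, hsplit, ENNReal.toReal_add (ENNReal.sum_ne_top.2 hheadfin)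
        (ne_top_of_le_ne_top ENNReal.ofReal_ne_top (htail μ hμN))]
      congr 1
      rw [ENNReal.toReal_sum hheadfin]
      exact Finset.sum_congr rfl fun k _ => by rw [ENNReal.toReal_mul]; simp
    have h3 := hmean μ hμN
    rw [hM]; rw [hε] at htailR; linarith
  obtain ⟨q, hq0, hqθ, hqfix, hqd⟩ := key_analytic μ hμtop ℓ M c₀ θ hM1 hc1 hθ0.le hθ1
    (le_of_eq hθpow.symm) hhead
  have hq1 : q ≤ 1 := hqθ.trans hθ1.le
  have hext : extinctProb (P μ) ≤ q := extinct_le (hP μ) hq0 hq1 hqfix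
  have hext0 : 0 ≤ extinctProb (P μ) := ENNReal.toReal_nonneg
  constructor
  · have h4 := min_le_left (1 - θ) ((1 - θ) / 2 * (c₀ - 1))
    calc extinctProb (P μ) ≤ q := hext
      _ ≤ θ := hqθ
      _ ≤ 1 - p := by rw [hp]; linarith
  · have h5 := min_le_right (1 - θ) ((1 - θ) / 2 * (c₀ - 1))
    calc fgenDeriv μ (extinctProb (P μ)) ≤ fgenDeriv μ q :=
          fgenDeriv_mono μ hμtop hext0 hext hq1
      _ ≤ 1 - (1 - θ) / 2 * (c₀ - 1) := hqd
      _ ≤ 1 - p := by rw [hp]; linarith
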